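/- arXiv:2101.00711 — 6 statements merged into one kernel-verified Lean document; each statement's English description precedes it below -/
import Mathlib

section
/- Let s ∈ Σⁿ be an ε-self-matching string. In any single round of computing a longest common subsequence between s and a list L of received index symbols (where each received symbol carries a true origin position in [n]), the number of matched pairs (s[i], L[j]) where the received symbol L[j] originally came from position i' ≠ i of s is at most nε. -/
variable {α : Type*}

/-- Insertion-deletion edit distance. -/
def ED [DecidableEq α] : List α → List α → ℕ
  | [], ys => ys.length
  | _ :: xs, [] => xs.length + 1
  | x :: xs, y :: ys =>
    if x = y then ED xs ys
    else 1 + min (ED (x :: xs) ys) (ED xs (y :: ys))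
termination_by xs ys => xs.length + ys.length
decreasing_by all_goals (simp; try omega)

/-- Length of longest common subsequence. -/
def LCSlen [DecidableEq α] : List α → List α → ℕ
  | [], _ => 0
  | _ :: _, [] => 0
  | x :: xs, y :: ys =>
    if x = y then 1 + LCSlen xs ys
    else max (LCSlen (x :: xs) ys) (LCSlen xs (y :: ys))
termination_by xs ys => xs.length + ys.length
decreasing_by all_goals (simp; try omega)

/-- substring S[i, j) of an (infinite) string -/
def sub (S : ℕ → α) (i j : ℕ) : List α := (List.range' i (j - i)).map S

def IsSyncString [DecidableEq α] (ε : ℝ) (n : ℕ) (S : ℕ → α) : Prop :=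
  ∀ i j k : ℕ, i < j → j < k → k ≤ n →
    (1 - ε) * ((k : ℝ) - i) < ED (sub S i j) (sub S j k)

def ReachableR (c y : List α) (D G : ℝ) : Prop :=
  ∃ z : List α, z.Sublist c ∧ z.Sublist y ∧
    (c.length : ℝ) - z.length ≤ D ∧ (y.length : ℝ) - z.length ≤ G

def HasSelfMatching {σ : Type*} {n : ℕ} (S : Fin n → σ) (k : ℕ) : Prop :=
  ∃ a b : Fin k → Fin n, StrictMono a ∧ StrictMono b ∧
    ∀ t, a t ≠ b t ∧ S (a t) = S (b t)

/-- In an LCS round against an ε-self-matching string `s`, the number of matched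
pairs whose received symbol originated at a different position is at most `nε`. -/
theorem stmt2 {σ : Type*} (n : ℕ) (ε : ℝ) (s : Fin n → σ)
    (hs : ¬ HasSelfMatching s ⌊(n : ℝ) * ε⌋₊)
    (m : ℕ) (pos orig : Fin m → Fin n)
    (hpos : StrictMono pos) (horig : StrictMono orig)
    (hmatch : ∀ t, s (pos t) = s (orig t)) :
    ((Finset.univ.filter fun t : Fin m => pos t ≠ orig t).card : ℝ) ≤ (n : ℝ) * ε := by
  classical
  set F := Finset.univ.filter fun t : Fin m => pos t ≠ orig t with hF
  set k := ⌊(n : ℝ) * ε⌋₊ with hk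
  -- k ≥ 1, since a self-matching of size 0 always exists
  have hk1 : 1 ≤ k := by
    by_contra h
    have hk0 : k = 0 := by omega
    rw [hk0] at hs
    exact hs ⟨Fin.elim0, Fin.elim0, fun a b hab => a.elim0, fun a b hab => a.elim0,
      fun t => t.elim0⟩
  have hεpos : (0:ℝ) ≤ (n : ℝ) * ε := by
    by_contra h
    push_neg at h
    have : k = 0 := Nat.floor_of_nonpos h.le
    omega
  by_contra hlt
  push_neg at hlt
  have hfk : (k:ℝ) ≤ (n:ℝ) * ε := Nat.floor_le hεpos
  have hkF : k ≤ F.card := by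
    have : (k:ℝ) < F.card := lt_of_le_of_lt hfk hlt
    exact_mod_cast this.le
  -- build a self-matching of size k
  have e : Fin F.card ≃o {x // x ∈ F} := F.orderIsoOfFin rfl
  set f : Fin k → Fin m := fun t => (e (Fin.castLE hkF t) : Fin m) with hf
  have hfmono : StrictMono f := by
    intro a b hab
    exact e.strictMono (by simpa using hab)
  have hfmem : ∀ t, f t ∈ F := fun t => (e (Fin.castLE hkF t)).2
  refine hs ⟨fun t => pos (f t), fun t => orig (f t), hpos.comp hfmono,
    horig.comp hfmono, fun t => ⟨?_, hmatch (f t)⟩⟩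
  have := hfmem t
  rw [hF] at this
  simpa using (Finset.mem_filter.mp this).2
end

section
/- For every family of q-ary insertion-deletion codes with integer d = δq that can be uniquely decoded from a δ-fraction of deletions, the rate is at most (1-δ)(1 + log(1-δ)/log q) + o(1). Consequently, any such family achieving rate 1 - δ - ε must have alphabet size q ≥ exp((1-δ)·ln(1/(1-δ))/ε). -/
variable {α : Type*}

/-!
Deleting every occurrence of the `d` least frequent symbols of a codeword removes at most a
`d / q = δ` fraction of its positions (a `d`-set of symbols of minimal total count contains no
symbol more frequent than one outside it). Cut to the common length `n - ⌊δ n⌋`, what is left is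
a subsequence from which the decoder recovers the codeword, and it is a word over the remaining
`q - d` symbols. Codewords are thus determined by such words, of which there are at most
`C(q, q - d) (q - d) ^ (n - ⌊δ n⌋)`. The bound on `q` is the rate bound solved for `log q`.
-/

open Finset

theorem Finset.card_compl_nsmul_sum_le {α M : Type*} [Fintype α] [DecidableEq α]
    [AddCommMonoid M] [PartialOrder M] [IsOrderedAddMonoid M] {f : α → M} {T : Finset α}
    (hT : ∀ t ∈ T, ∀ s ∉ T, f t ≤ f s) :
    #Tᶜ • ∑ t ∈ T, f t ≤ #T • ∑ s ∈ Tᶜ, f s := by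
  calc #Tᶜ • ∑ t ∈ T, f t = ∑ t ∈ T, ∑ _s ∈ Tᶜ, f t := by
        simp only [sum_const, smul_sum]
    _ ≤ ∑ t ∈ T, ∑ s ∈ Tᶜ, f s :=
      sum_le_sum fun t ht => sum_le_sum fun s hs => hT t ht s (mem_compl.1 hs)
    _ = #T • ∑ s ∈ Tᶜ, f s := by rw [sum_const]

theorem Finset.le_of_forall_sum_le_sum_powersetCard {α M : Type*} [Fintype α] [DecidableEq α]
    [AddCommMonoid M] [PartialOrder M] [IsOrderedCancelAddMonoid M] {f : α → M} {T : Finset α}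
    (hmin : ∀ S ∈ univ.powersetCard #T, ∑ a ∈ T, f a ≤ ∑ a ∈ S, f a)
    {t s : α} (ht : t ∈ T) (hs : s ∉ T) : f t ≤ f s := by
  have hswap : insert s (T.erase t) ∈ univ.powersetCard #T := by
    rw [mem_powersetCard_univ, card_insert_of_notMem (by simp [hs]), card_erase_of_mem ht]
    have := card_pos.2 ⟨t, ht⟩
    omega
  have hle := hmin _ hswap
  rw [sum_insert (show s ∉ T.erase t by simp [hs])] at hle
  rw [← sum_erase_add T f ht, add_comm] at hle
  exact le_of_add_le_add_right hle

theorem Finset.exists_card_eq_card_mul_sum_le {α : Type*} [Fintype α] [DecidableEq α]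
    (f : α → ℕ) {d : ℕ} (hd : d ≤ Fintype.card α) :
    ∃ T : Finset α, #T = d ∧ Fintype.card α * ∑ t ∈ T, f t ≤ d * ∑ a, f a := by
  obtain ⟨T, hT, hmin⟩ := (univ.powersetCard d).exists_min_image (fun S => ∑ a ∈ S, f a)
    (powersetCard_nonempty.2 (by simpa using hd))
  rw [mem_powersetCard_univ] at hT
  have hexch := card_compl_nsmul_sum_le fun t ht s hs =>
    le_of_forall_sum_le_sum_powersetCard (hT ▸ hmin) ht hs
  rw [card_compl, hT, smul_eq_mul, smul_eq_mul] at hexch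
  refine ⟨T, hT, ?_⟩
  calc Fintype.card α * ∑ t ∈ T, f t
      = (Fintype.card α - d) * ∑ t ∈ T, f t + d * ∑ t ∈ T, f t := by
        rw [← add_mul, Nat.sub_add_cancel hd]
    _ ≤ d * ∑ s ∈ Tᶜ, f s + d * ∑ t ∈ T, f t := by gcongr
    _ = d * ∑ a, f a := by rw [← mul_add, sum_compl_add_sum]

theorem List.sum_count_eq_countP_mem {α : Type*} [DecidableEq α] (T : Finset α) (c : List α) :
    ∑ t ∈ T, c.count t = c.countP (· ∈ T) := by
  induction c with
  | nil => simp
  | cons a c ih =>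
    simp only [List.count_cons, List.countP_cons, sum_add_distrib, ih]
    by_cases h : a ∈ T <;> simp [h]

theorem List.exists_card_eq_card_mul_countP_notMem_le {α : Type*} [Fintype α] [DecidableEq α]
    (c : List α) {d : ℕ} (hd : d ≤ Fintype.card α) :
    ∃ S : Finset α, #S = Fintype.card α - d ∧
      Fintype.card α * c.countP (· ∉ S) ≤ d * c.length := by
  obtain ⟨T, hT, hle⟩ := exists_card_eq_card_mul_sum_le c.count hd
  refine ⟨Tᶜ, by rw [card_compl, hT], ?_⟩
  simpa [List.sum_count_eq_countP_mem] using hle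

theorem List.exists_sublist_length_eq_sub_of_mul_length_lt {α : Type*} [Fintype α]
    [DecidableEq α] (c : List α) {d k : ℕ} (hd : d ≤ Fintype.card α)
    (hk : d * c.length < Fintype.card α * (k + 1)) :
    ∃ S : Finset α, #S = Fintype.card α - d ∧
      ∃ y : List α, y.Sublist c ∧ y.length = c.length - k ∧ ∀ a ∈ y, a ∈ S := by
  obtain ⟨S, hS, hdel⟩ := c.exists_card_eq_card_mul_countP_notMem_le hd
  have hdel_le : c.countP (· ∉ S) ≤ k :=
    Nat.lt_succ_iff.1 (Nat.lt_of_mul_lt_mul_left (hdel.trans_lt hk))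
  refine ⟨S, hS, (c.filter (· ∈ S)).take (c.length - k),
    (List.take_sublist _ _).trans List.filter_sublist, ?_, fun a ha => ?_⟩
  · have hsplit := c.length_eq_countP_add_countP (· ∈ S)
    simp only [decide_eq_true_eq, decide_not] at hsplit hdel_le
    rw [List.length_take, min_eq_left_iff, ← List.countP_eq_length_filter]
    omega
  · exact of_decide_eq_true (List.mem_filter.1 ((List.take_sublist _ _).subset ha)).2

theorem card_le_choose_mul_pow_of_injOn {α β : Type*} [Fintype α] [DecidableEq α]
    {s : Finset β} {y : β → List α} {k m : ℕ} (hy : Set.InjOn y s)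
    (hlen : ∀ b ∈ s, (y b).length = m)
    (hsub : ∀ b ∈ s, ∃ S : Finset α, #S = k ∧ ∀ a ∈ y b, a ∈ S) :
    #s ≤ (Fintype.card α).choose k * k ^ m := by
  let words : Finset (List α) :=
    (univ.powersetCard k).biUnion fun S => (Fintype.piFinset fun _ : Fin m => S).image List.ofFn
  have hwords : #words ≤ (Fintype.card α).choose k * k ^ m := by
    refine card_biUnion_le.trans ?_
    calc ∑ S ∈ univ.powersetCard k, #((Fintype.piFinset fun _ : Fin m => S).image List.ofFn)
        ≤ ∑ S ∈ univ.powersetCard k, k ^ m := by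
          refine sum_le_sum fun S hS => card_image_le.trans ?_
          rw [Fintype.card_piFinset, prod_const, (mem_powersetCard_univ.1 hS), card_univ,
            Fintype.card_fin]
      _ = (Fintype.card α).choose k * k ^ m := by
          rw [sum_const, card_powersetCard, card_univ, smul_eq_mul]
  refine (card_le_card_of_injOn y (fun b hb => ?_) hy).trans hwords
  obtain ⟨S, hS, hyS⟩ := hsub b hb
  obtain rfl := hlen b hb
  exact mem_biUnion.2 ⟨S, mem_powersetCard_univ.2 hS, mem_image.2
    ⟨fun i => (y b)[i], Fintype.mem_piFinset.2 fun i => hyS _ (List.getElem_mem _),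
      List.ofFn_getElem⟩⟩

theorem Nat.cast_sub_le_cast_sub_floor {R : Type*} [Ring R] [LinearOrder R]
    [IsStrictOrderedRing R] [FloorSemiring R] (n : ℕ) {x : R} (hx : 0 ≤ x) :
    (n : R) - x ≤ ((n - ⌊x⌋₊ : ℕ) : R) := by
  have hfloor := Nat.floor_le hx
  rcases le_total ⌊x⌋₊ n with h | h
  · rw [Nat.cast_sub h]
    exact sub_le_sub_left hfloor _
  · rw [Nat.sub_eq_zero_of_le h, Nat.cast_zero, sub_nonpos]
    exact (Nat.cast_le.2 h).trans hfloor

theorem Real.exp_div_le_of_le_mul_one_add_log_div_log {q δ ε : ℝ} (hq : 1 < q) (hε : 0 < ε)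
    (h : 1 - δ - ε ≤ (1 - δ) * (1 + Real.log (1 - δ) / Real.log q)) :
    Real.exp ((1 - δ) * Real.log (1 / (1 - δ)) / ε) ≤ q := by
  have hlog : 0 < Real.log q := Real.log_pos hq
  have h' : -ε ≤ (1 - δ) * Real.log (1 - δ) / Real.log q := by
    rw [mul_one_add, ← mul_div_assoc] at h
    linarith
  rw [le_div_iff₀ hlog] at h'
  rw [← Real.exp_log (by linarith : 0 < q), Real.exp_le_exp, div_le_iff₀ hε, one_div,
    Real.log_inv]
  linarith

theorem stmt5_general (q d n : ℕ) (δ : ℝ) (hq : 2 ≤ q)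
    (hδ0 : 0 < δ) (hδ1 : δ < 1) (hd : (d : ℝ) = δ * q)
    (C : Finset (List (Fin q))) (hlen : ∀ c ∈ C, c.length = n)
    (D : List (Fin q) → List (Fin q))
    (hdec : ∀ c ∈ C, ∀ y : List (Fin q),
      y.Sublist c → (n : ℝ) - δ * n ≤ (y.length : ℝ) → D y = c) :
    (C.card : ℝ) ≤ (q.choose (q - d) : ℝ) * ((q - d : ℕ) : ℝ) ^ (n - ⌊δ * n⌋₊)
    ∧ ∀ ε : ℝ, 0 < ε →
        1 - δ - ε ≤ (1 - δ) * (1 + Real.log (1 - δ) / Real.log q) →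
        Real.exp ((1 - δ) * Real.log (1 / (1 - δ)) / ε) ≤ (q : ℝ) := by
  have hq0 : (0 : ℝ) < q := by positivity
  have hdq : d ≤ q := by
    have : (d : ℝ) ≤ q := by rw [hd]; nlinarith
    exact_mod_cast this
  have hk : ∀ c ∈ C, d * c.length < q * (⌊δ * n⌋₊ + 1) := by
    intro c hc
    have : (d : ℝ) * n < q * (⌊δ * n⌋₊ + 1) := by
      rw [hd, mul_comm δ, mul_assoc]
      exact mul_lt_mul_of_pos_left (Nat.lt_floor_add_one _) hq0
    rw [hlen c hc]
    exact_mod_cast this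
  choose! S hScard y hysub hylen hyS using fun (c : List (Fin q)) (hc : c ∈ C) =>
    c.exists_sublist_length_eq_sub_of_mul_length_lt (by simpa using hdq) (by simpa using hk c hc)
  have hdecodable : ∀ c ∈ C, D (y c) = c := fun c hc =>
    hdec c hc _ (hysub c hc) (by
      rw [hylen c hc, hlen c hc]
      exact Nat.cast_sub_le_cast_sub_floor n (by positivity))
  have hinj : Set.InjOn y C := fun c₁ h₁ c₂ h₂ he => by
    rw [← hdecodable c₁ h₁, he, hdecodable c₂ h₂]
  have hcard := card_le_choose_mul_pow_of_injOn (k := q - d) (m := n - ⌊δ * n⌋₊) hinj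
    (fun c hc => by rw [hylen c hc, hlen c hc]) fun c hc =>
      ⟨S c, by simpa using hScard c hc, hyS c hc⟩
  rw [Fintype.card_fin] at hcard
  exact ⟨by exact_mod_cast hcard,
    fun ε hε h => Real.exp_div_le_of_le_mul_one_add_log_div_log (by exact_mod_cast hq) hε h⟩

/-- Rate upper bound for unique decoding from a δ-fraction of deletions, with `d = δq`
an integer, plus the resulting alphabet-size lower bound `q ≥ exp((1-δ)ln(1/(1-δ))/ε)`. -/
theorem stmt5 (q d n : ℕ) (δ : ℝ) (hq : 2 ≤ q) (hn : 0 < n)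
    (hδ0 : 0 < δ) (hδ1 : δ < 1) (hd : (d : ℝ) = δ * q)
    (C : Finset (List (Fin q))) (hlen : ∀ c ∈ C, c.length = n)
    (D : List (Fin q) → List (Fin q))
    (hdec : ∀ c ∈ C, ∀ y : List (Fin q),
      y.Sublist c → (n : ℝ) - δ * n ≤ (y.length : ℝ) → D y = c) :
    (C.card : ℝ) ≤ (q.choose (q - d) : ℝ) * ((q - d : ℕ) : ℝ) ^ (n - ⌊δ * n⌋₊)
    ∧ ∀ ε : ℝ, 0 < ε →
        1 - δ - ε ≤ (1 - δ) * (1 + Real.log (1 - δ) / Real.log q) →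
        Real.exp ((1 - δ) * Real.log (1 / (1 - δ)) / ε) ≤ (q : ℝ) :=
  stmt5_general q d n δ hq hδ0 hδ1 hd C hlen D hdec
end

section
/- For any alphabet size q ≥ 2 and any i ∈ {1, ..., q-1}, no infinite family of q-ary codes of positive rate can be list-decoded (with polynomially bounded list size) from a δ = (q-i)/q fraction of deletions combined with a γ = i(i-1)/q fraction of insertions: an adversary can transform any codeword of length n into a fixed string depending only on an i-element subset of the alphabet, using at most δn deletions and γn insertions, so the number of distinguishable received strings is O_q(1)·|Σ_target strings|, forcing rate → 0. -/
variable {α : Type*}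

/-! Write `n = q t`. The `i` most frequent symbols of a codeword `c` fill at least `i t`
positions; deleting everything else except `i t` of them costs `n - i t = δ n` deletions and
leaves a word over an `i`-set `S = {σ₁, …, σᵢ}`, hence a subsequence of `(σ₁ ⋯ σᵢ)^(i t)`,
which is reached with `i t (i - 1) = γ n` insertions. So every codeword is in the list of one
of `C(q, i)` received words. -/

open Finset

variable {ι : Type*}

theorem Finset.exists_card_eq_forall_le_of_mem_of_notMem {R : Type*} [LinearOrder R] [Fintype ι]
    (f : ι → R) {i : ℕ} (hi : i ≤ Fintype.card ι) :
    ∃ S : Finset ι, #S = i ∧ ∀ a ∈ S, ∀ b ∉ S, f b ≤ f a := by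
  classical
  induction i with
  | zero => exact ⟨∅, card_empty, by simp⟩
  | succ i ih =>
    obtain ⟨S, hS, hdom⟩ := ih (by omega)
    have hSc : Sᶜ.Nonempty := card_pos.mp (by rw [card_compl]; omega)
    obtain ⟨b, hb, hbmax⟩ := exists_max_image Sᶜ f hSc
    have hbS : b ∉ S := mem_compl.mp hb
    refine ⟨insert b S, by rw [card_insert_of_notMem hbS, hS], ?_⟩
    intro a ha c hc
    rw [mem_insert, not_or] at hc
    rcases mem_insert.mp ha with rfl | ha
    · exact hbmax c (mem_compl.mpr hc.2)
    · exact hdom a ha c hc.2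

theorem Finset.sum_mul_card_le_card_mul_sum {R : Type*} [CommSemiring R] [PartialOrder R]
    [IsOrderedRing R] [Fintype ι] (f : ι → R) {S : Finset ι}
    (hS : ∀ a ∈ S, ∀ b ∉ S, f b ≤ f a) :
    (∑ a, f a) * #S ≤ Fintype.card ι * ∑ a ∈ S, f a := by
  classical
  have hswap : #S • ∑ b ∈ Sᶜ, f b ≤ #Sᶜ • ∑ a ∈ S, f a := by
    have := sum_le_sum fun a ha => sum_le_sum fun b hb => hS a ha b (mem_compl.mp hb)
    simpa only [sum_const, ← smul_sum] using this
  rw [nsmul_eq_mul, nsmul_eq_mul] at hswap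
  calc (∑ a, f a) * #S = (∑ a ∈ S, f a) * #S + #S * ∑ b ∈ Sᶜ, f b := by
        rw [← sum_add_sum_compl S f]; ring
    _ ≤ (∑ a ∈ S, f a) * #S + #Sᶜ * ∑ a ∈ S, f a := by gcongr
    _ = Fintype.card ι * ∑ a ∈ S, f a := by
        rw [← card_add_card_compl S]; push_cast; ring

theorem List.sum_count_eq_length_filter [DecidableEq α] (c : List α) (S : Finset α) :
    ∑ a ∈ S, c.count a = (c.filter (· ∈ S)).length := by
  have hmem : ∀ a ∈ (c.filter (· ∈ S) : Multiset α), a ∈ S := by simp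
  rw [← Multiset.coe_card, ← Multiset.sum_count_eq_card hmem]
  refine sum_congr rfl fun a ha => ?_
  simp [List.count_filter, ha]

theorem List.sublist_flatten_replicate {z s : List α} {m : ℕ} (hz : ∀ a ∈ z, a ∈ s)
    (hlen : z.length ≤ m) : z.Sublist (List.replicate m s).flatten := by
  induction z generalizing m with
  | nil => exact List.nil_sublist _
  | cons a z ih =>
    obtain ⟨m, rfl⟩ : ∃ k, m = k + 1 := Nat.exists_eq_add_one.mpr (by simp at hlen; omega)
    rw [List.replicate_succ, List.flatten_cons]
    exact (List.singleton_sublist.mpr (hz a (by simp))).append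
      (ih (fun b hb => hz b (by simp [hb])) (by simpa using hlen))

theorem List.exists_card_eq_mul_le_length_filter [Fintype α] [DecidableEq α] (c : List α)
    {i : ℕ} (hi : i ≤ Fintype.card α) :
    ∃ S : Finset α, #S = i ∧ c.length * i ≤ Fintype.card α * (c.filter (· ∈ S)).length := by
  obtain ⟨S, hS, hdom⟩ := exists_card_eq_forall_le_of_mem_of_notMem c.count hi
  refine ⟨S, hS, ?_⟩
  simpa [hS, List.sum_count_eq_length_filter] using sum_mul_card_le_card_mul_sum c.count hdom

noncomputable def periodicWord (S : Finset α) (m : ℕ) : List α :=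
  (List.replicate m S.toList).flatten

theorem length_periodicWord (S : Finset α) (m : ℕ) : (periodicWord S m).length = m * #S := by
  simp [periodicWord]

theorem reachableR_periodicWord [DecidableEq α] {c : List α} {S : Finset α} {m : ℕ}
    (hm : m ≤ (c.filter (· ∈ S)).length) :
    ReachableR c (periodicWord S m) (c.length - m) (m * (#S - 1)) := by
  have hlen : ((c.filter (· ∈ S)).take m).length = m := by simpa using hm
  refine ⟨(c.filter (· ∈ S)).take m, (List.take_sublist _ _).trans List.filter_sublist,
    List.sublist_flatten_replicate (fun a ha => ?_) hlen.le, ?_, ?_⟩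
  · simpa using (List.mem_filter.mp (List.mem_of_mem_take ha)).2
  · rw [hlen]
  · rw [hlen, length_periodicWord]; push_cast; linarith

theorem Finset.card_le_mul_card_of_forall_exists_rel {β γ : Type*} {C : Finset β}
    {T : Finset γ} (R : β → γ → Prop) {L : ℕ} (hcover : ∀ c ∈ C, ∃ y ∈ T, R c y)
    (hL : ∀ y ∈ T, Nat.card {c // c ∈ C ∧ R c y} ≤ L) : #C ≤ L * #T := by
  classical
  have hfiber : ∀ y ∈ T, #{c ∈ C | R c y} ≤ L := fun y hy => by
    rw [← Nat.card_eq_finsetCard]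
    exact (Nat.card_congr (Equiv.subtypeEquivRight fun c => mem_filter)).trans_le (hL y hy)
  calc #C ≤ #(T.biUnion fun y => {c ∈ C | R c y}) := card_le_card fun c hc => by
        obtain ⟨y, hy, hR⟩ := hcover c hc
        exact mem_biUnion.mpr ⟨y, hy, mem_filter.mpr ⟨hc, hR⟩⟩
    _ ≤ ∑ y ∈ T, #{c ∈ C | R c y} := card_biUnion_le
    _ ≤ ∑ _y ∈ T, L := sum_le_sum hfiber
    _ = L * #T := by rw [sum_const, smul_eq_mul, mul_comm]

theorem stmt6_general (q i n L : ℕ) (hq : 2 ≤ q) (hi2 : i ≤ q - 1)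
    (hdvd : q ∣ n)
    (δ γ : ℝ) (hδ : δ = ((q : ℝ) - i) / q) (hγ : γ = ((i : ℝ) * ((i : ℝ) - 1)) / q)
    (C : Finset (List (Fin q))) (hlen : ∀ c ∈ C, c.length = n)
    (hld : ∀ y : List (Fin q),
      Nat.card {c : List (Fin q) // c ∈ C ∧ ReachableR c y (δ * n) (γ * n)} ≤ L) :
    C.card ≤ L * q.choose i := by
  classical
  obtain ⟨t, rfl⟩ := hdvd
  have hq0 : (q : ℝ) ≠ 0 := by positivity
  have hcover : ∀ c ∈ C, ∃ S ∈ powersetCard i (univ : Finset (Fin q)),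
      ReachableR c (periodicWord S (i * t)) (δ * ↑(q * t)) (γ * ↑(q * t)) := by
    intro c hc
    obtain ⟨S, hS, hcount⟩ := c.exists_card_eq_mul_le_length_filter (i := i) (by simp; omega)
    rw [hlen c hc, Fintype.card_fin, mul_right_comm, mul_assoc] at hcount
    refine ⟨S, mem_powersetCard_univ.mpr hS, ?_⟩
    convert reachableR_periodicWord (Nat.le_of_mul_le_mul_left hcount (by omega)) using 1
    · rw [hlen c hc, hδ]; push_cast; field_simp
    · rw [hS, hγ]; push_cast; field_simp
  calc #C ≤ L * #(powersetCard i (univ : Finset (Fin q))) :=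
        card_le_mul_card_of_forall_exists_rel _ hcover fun S _ => hld _
    _ = L * q.choose i := by simp

/-- For `δ = (q-i)/q` deletions and `γ = i(i-1)/q` insertions, any `q`-ary
list-decodable code (list size `L`) of block length `n` (with `q ∣ n`) has at most
`L·C(q,i)` codewords — hence no such positive-rate family exists. -/
theorem stmt6 (q i n L : ℕ) (hq : 2 ≤ q) (hi1 : 1 ≤ i) (hi2 : i ≤ q - 1)
    (hdvd : q ∣ n) (hn : 0 < n)
    (δ γ : ℝ) (hδ : δ = ((q : ℝ) - i) / q) (hγ : γ = ((i : ℝ) * ((i : ℝ) - 1)) / q)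
    (C : Finset (List (Fin q))) (hlen : ∀ c ∈ C, c.length = n)
    (hld : ∀ y : List (Fin q),
      Nat.card {c : List (Fin q) // c ∈ C ∧ ReachableR c y (δ * n) (γ * n)} ≤ L) :
    C.card ≤ L * q.choose i :=
  stmt6_general q i n L hq hi2 hdvd δ γ hδ hγ C hlen hld
end

section
/- For binary codes (q=2), no positive-rate family of codes can be list-decoded from any combination of δn deletions and γn insertions with 2δ + γ ≥ 1: by time-sharing between the attack that deletes the less frequent bit (δ = 1/2, γ = 0) and the attack that inserts bits to produce (01)ⁿ (δ = 0, γ = 1), an adversary with budget (γ, δ) satisfying 2δ + γ = 1 can map all codewords in a positive-density subset to a common string. -/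
variable {α : Type*}

def alternating : ℕ → List Bool
  | 0 => []
  | m + 1 => false :: true :: alternating m

@[simp]
lemma length_alternating (m : ℕ) : (alternating m).length = 2 * m := by
  induction m with
  | zero => rfl
  | succ m ih => simp only [alternating, List.length_cons, ih]; ring

lemma sublist_alternating_of_length_le :
    ∀ {m : ℕ} {l : List Bool}, l.length ≤ m → l.Sublist (alternating m)
  | 0, l, hl => by simp [List.eq_nil_of_length_eq_zero (Nat.le_zero.mp hl)]
  | _ + 1, [], _ => List.nil_sublist _
  | m + 1, false :: l, hl =>
    ((sublist_alternating_of_length_le (m := m) (by simpa using hl)).cons true).cons_cons false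
  | m + 1, true :: l, hl =>
    ((sublist_alternating_of_length_le (m := m) (by simpa using hl)).cons_cons true).cons false

lemma exists_replicate_sublist_of_two_mul_le_length {l : List Bool} {k : ℕ}
    (hl : 2 * k ≤ l.length) :
    ∃ b, (List.replicate k b).Sublist l := by
  simp only [List.replicate_sublist_iff]
  by_contra! h
  have := List.count_true_add_count_false l
  have := h true; have := h false
  omega

/-- Time-sharing: delete the minority bit of the first `2D` symbols and pad the remaining `G`
symbols to `(01)^G`. -/
lemma exists_reachableR_replicate_append_alternating {c : List Bool} {D G : ℕ}
    (hc : c.length = 2 * D + G) :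
    ∃ b, ReachableR c (List.replicate D b ++ alternating G) D G := by
  obtain ⟨b, hb⟩ := exists_replicate_sublist_of_two_mul_le_length (l := c.take (2 * D)) (k := D)
    (by rw [List.length_take]; omega)
  have hdrop : (c.drop (2 * D)).length = G := by rw [List.length_drop]; omega
  refine ⟨b, List.replicate D b ++ c.drop (2 * D), ?_, ?_, ?_, ?_⟩
  · simpa using hb.append (List.Sublist.refl (c.drop (2 * D)))
  · exact (List.Sublist.refl _).append (sublist_alternating_of_length_le hdrop.le)
  · simp only [List.length_append, List.length_replicate, hdrop, hc]; push_cast; linarith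
  · simp only [List.length_append, List.length_replicate, hdrop, length_alternating]
    push_cast; linarith

lemma Finset.card_le_card_mul_of_forall_exists {ι β : Type*} [Fintype ι] {C : Finset β}
    {R : β → ι → Prop} {L : ℕ} (hcover : ∀ c ∈ C, ∃ i, R c i)
    (hfiber : ∀ i, Nat.card {c // c ∈ C ∧ R c i} ≤ L) :
    C.card ≤ Fintype.card ι * L := by
  classical
  have hfilter (i : ι) : (C.filter (R · i)).card ≤ L := by
    rw [← Nat.card_eq_finsetCard, Nat.card_congr (Equiv.subtypeEquivRight fun c => by
      rw [Finset.mem_filter])]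
    exact hfiber i
  calc C.card ≤ (Finset.univ.biUnion fun i => C.filter (R · i)).card := by
        refine Finset.card_le_card fun c hc => ?_
        obtain ⟨i, hi⟩ := hcover c hc
        exact Finset.mem_biUnion.2 ⟨i, Finset.mem_univ i, Finset.mem_filter.2 ⟨hc, hi⟩⟩
    _ ≤ ∑ i, (C.filter (R · i)).card := Finset.card_biUnion_le
    _ ≤ ∑ _i : ι, L := Finset.sum_le_sum fun i _ => hfilter i
    _ = Fintype.card ι * L := by simp

theorem stmt7_general (n D G L : ℕ) (δ γ : ℝ)
    (hδ : (D : ℝ) = δ * n) (hγ : (G : ℝ) = γ * n)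
    (hDG : 2 * D + G = n)
    (C : Finset (List Bool)) (hlen : ∀ c ∈ C, c.length = n)
    (hld : ∀ y : List Bool,
      Nat.card {c : List Bool // c ∈ C ∧ ReachableR c y (δ * n) (γ * n)} ≤ L) :
    C.card ≤ 2 * L := by
  rw [← hδ, ← hγ] at hld
  have hcover (c) (hc : c ∈ C) :
      ∃ b, ReachableR c (List.replicate D b ++ alternating G) D G :=
    exists_reachableR_replicate_append_alternating ((hlen c hc).trans hDG.symm)
  simpa using Finset.card_le_card_mul_of_forall_exists hcover fun b => hld _

/-- Binary list decoding is impossible at `2δ + γ = 1`: with `D = δn` deletions and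
`G = γn` insertions (`2D + G = n`), a time-sharing adversary maps every codeword to one
of only two strings, so any `L`-list-decodable code has at most `2L` codewords. -/
theorem stmt7 (n D G L : ℕ) (hn : 0 < n) (δ γ : ℝ)
    (hδ : (D : ℝ) = δ * n) (hγ : (G : ℝ) = γ * n) (hshare : 2 * δ + γ = 1)
    (hDG : 2 * D + G = n)
    (C : Finset (List Bool)) (hlen : ∀ c ∈ C, c.length = n)
    (hld : ∀ y : List Bool,
      Nat.card {c : List Bool // c ∈ C ∧ ReachableR c y (δ * n) (γ * n)} ≤ L) :
    C.card ≤ 2 * L :=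
  stmt7_general n D G L δ γ hδ hγ hDG C hlen hld
end

section
/- Let n ∈ ℕ be even and γ > 0 with γn ∈ ℕ. If S ∈ Σⁿ is an ε-synchronization string, then the string S' ∈ (Σ³)^{γn²} defined by S'[i] = (S[i mod n], S[(i + n/2) mod n], S[⌈i/(γn)⌉]) is an (ε + 6γ)-synchronization string of length γn². -/
variable {α : Type*}

/-!
Since `ED x y + 2 * LCSlen x y = |x| + |y|`, being an `ε`-synchronization string means
`2 * LCSlen (S[i, j), S[j, k)) < ε (k - i)`, and a letterwise projection can only increase the
LCS; so it suffices to bound the LCS of a single coordinate of the new string.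

If `k - i ≤ n / 2`, the window `[i, k)` does not wrap around modulo `n` for one of the shifts
`0` and `n / 2`, and the corresponding coordinate is a contiguous piece of `S`.

If `k - i > n / 2`, use the third coordinate, the `g`-fold blow-up of `S`. Cutting the smaller
part of the block containing `j` off one side costs at most `g / 2`; the LCS of two blown-up
strings is at most `g` times the LCS of the original ones; and rounding the interval to whole
blocks costs `2 g ε`. The total error `(2 ε + 1) g ≤ 3 g = 3 γ n` is less than `6 γ (k - i)`.
-/

section LCS

variable [DecidableEq α]

theorem ED_add_two_mul_LCSlen :
    ∀ x y : List α, ED x y + 2 * LCSlen x y = x.length + y.length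
  | [], ys => by simp [ED, LCSlen]
  | x :: xs, [] => by simp [ED, LCSlen]
  | x :: xs, y :: ys => by
    have h₁ := ED_add_two_mul_LCSlen (x :: xs) ys
    have h₂ := ED_add_two_mul_LCSlen xs (y :: ys)
    have h₃ := ED_add_two_mul_LCSlen xs ys
    simp only [List.length_cons] at h₁ h₂ h₃ ⊢
    by_cases h : x = y
    · rw [ED, LCSlen, if_pos h, if_pos h]; omega
    · rw [ED, LCSlen, if_neg h, if_neg h]; omega
termination_by x y => x.length + y.length

theorem length_le_LCSlen :
    ∀ {x y z : List α}, z.Sublist x → z.Sublist y → z.length ≤ LCSlen x y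
  | _, _, [], _, _ => Nat.zero_le _
  | [], _, _ :: _, hzx, _ => by simp at hzx
  | _ :: _, [], _ :: _, _, hzy => by simp at hzy
  | x :: xs, y :: ys, a :: z, hzx, hzy => by
    rw [LCSlen]
    split_ifs with h
    · have := length_le_LCSlen hzx.of_cons_cons hzy.of_cons_cons
      simp only [List.length_cons]
      omega
    · rcases List.sublist_cons_iff.mp hzx with hx | ⟨_, hax, -⟩
      · exact (length_le_LCSlen hx hzy).trans (le_max_right _ _)
      rcases List.sublist_cons_iff.mp hzy with hy | ⟨_, hay, -⟩
      · exact (length_le_LCSlen hzx hy).trans (le_max_left _ _)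
      exact absurd ((List.cons.inj hax).1.symm.trans (List.cons.inj hay).1) h
termination_by x y => x.length + y.length

theorem exists_sublist_length_eq_LCSlen :
    ∀ x y : List α, ∃ z : List α, z.Sublist x ∧ z.Sublist y ∧ z.length = LCSlen x y
  | [], _ => ⟨[], List.nil_sublist _, List.nil_sublist _, by simp [LCSlen]⟩
  | _ :: _, [] => ⟨[], List.nil_sublist _, List.nil_sublist _, by simp [LCSlen]⟩
  | x :: xs, y :: ys => by
    rw [LCSlen]
    split_ifs with h
    · obtain ⟨z, hzx, hzy, hz⟩ := exists_sublist_length_eq_LCSlen xs ys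
      subst h
      exact ⟨x :: z, hzx.cons_cons x, hzy.cons_cons x, by simp [hz, Nat.add_comm]⟩
    · obtain ⟨z₁, hzx₁, hzy₁, hz₁⟩ := exists_sublist_length_eq_LCSlen (x :: xs) ys
      obtain ⟨z₂, hzx₂, hzy₂, hz₂⟩ := exists_sublist_length_eq_LCSlen xs (y :: ys)
      rcases le_total (LCSlen (x :: xs) ys) (LCSlen xs (y :: ys)) with hle | hle
      · exact ⟨z₂, hzx₂.cons x, hzy₂, by rw [hz₂, max_eq_right hle]⟩
      · exact ⟨z₁, hzx₁, hzy₁.cons y, by rw [hz₁, max_eq_left hle]⟩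
termination_by x y => x.length + y.length

theorem LCSlen_mono {x x' y y' : List α} (hx : x.Sublist x') (hy : y.Sublist y') :
    LCSlen x y ≤ LCSlen x' y' := by
  obtain ⟨z, hzx, hzy, hz⟩ := exists_sublist_length_eq_LCSlen x y
  exact hz ▸ length_le_LCSlen (hzx.trans hx) (hzy.trans hy)

theorem LCSlen_le_length_left (x y : List α) : LCSlen x y ≤ x.length := by
  obtain ⟨z, hzx, -, hz⟩ := exists_sublist_length_eq_LCSlen x y
  exact hz ▸ hzx.length_le

theorem LCSlen_le_length_right (x y : List α) : LCSlen x y ≤ y.length := by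
  obtain ⟨z, -, hzy, hz⟩ := exists_sublist_length_eq_LCSlen x y
  exact hz ▸ hzy.length_le

theorem LCSlen_comm (x y : List α) : LCSlen x y = LCSlen y x := by
  have key : ∀ u v : List α, LCSlen u v ≤ LCSlen v u := fun u v => by
    obtain ⟨z, hzu, hzv, hz⟩ := exists_sublist_length_eq_LCSlen u v
    exact hz ▸ length_le_LCSlen hzv hzu
  exact le_antisymm (key x y) (key y x)

theorem LCSlen_le_LCSlen_map {β : Type*} [DecidableEq β] (f : α → β) (x y : List α) :
    LCSlen x y ≤ LCSlen (x.map f) (y.map f) := by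
  obtain ⟨z, hzx, hzy, hz⟩ := exists_sublist_length_eq_LCSlen x y
  rw [← hz, ← List.length_map (f := f)]
  exact length_le_LCSlen (hzx.map f) (hzy.map f)

theorem LCSlen_append_left_le (x₁ x₂ y : List α) :
    LCSlen (x₁ ++ x₂) y ≤ LCSlen x₁ y + LCSlen x₂ y := by
  obtain ⟨z, hzx, hzy, hz⟩ := exists_sublist_length_eq_LCSlen (x₁ ++ x₂) y
  obtain ⟨z₁, z₂, rfl, hz₁, hz₂⟩ := List.sublist_append_iff.mp hzx
  rw [← hz, List.length_append]
  exact add_le_add (length_le_LCSlen hz₁ ((List.sublist_append_left _ _).trans hzy))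
    (length_le_LCSlen hz₂ ((List.sublist_append_right _ _).trans hzy))

theorem LCSlen_append_right_le (x y₁ y₂ : List α) :
    LCSlen x (y₁ ++ y₂) ≤ LCSlen x y₁ + LCSlen x y₂ := by
  simpa only [LCSlen_comm x] using LCSlen_append_left_le y₁ y₂ x

theorem LCSlen_append_append_self (w x y : List α) :
    LCSlen (w ++ x) (w ++ y) = w.length + LCSlen x y := by
  induction w with
  | nil => simp
  | cons a w ih =>
    rw [List.cons_append, List.cons_append, LCSlen, if_pos rfl, ih, List.length_cons]
    omega

theorem LCSlen_replicate_append_le {a b : α} (hab : a ≠ b) (m l : ℕ) (x y : List α) :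
    LCSlen (List.replicate m a ++ x) (List.replicate l b ++ y) ≤
      max (LCSlen (List.replicate m a ++ x) y) (LCSlen x (List.replicate l b ++ y)) := by
  obtain ⟨z, hzx, hzy, hz⟩ :=
    exists_sublist_length_eq_LCSlen (List.replicate m a ++ x) (List.replicate l b ++ y)
  rw [← hz]
  obtain ⟨z₁, z₂, rfl, hz₁, hz₂⟩ := List.sublist_append_iff.mp hzx
  rcases z₁ with _ | ⟨c, z₁⟩
  · exact (length_le_LCSlen hz₂ hzy).trans (le_max_right _ _)
  obtain ⟨w₁, w₂, hw, hw₁, hw₂⟩ := List.sublist_append_iff.mp hzy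
  rcases w₁ with _ | ⟨d, w₁⟩
  · exact (length_le_LCSlen hzx (hw ▸ hw₂)).trans (le_max_left _ _)
  have hca : c = a := List.eq_of_mem_replicate (hz₁.subset List.mem_cons_self)
  have hdb : d = b := List.eq_of_mem_replicate (hw₁.subset List.mem_cons_self)
  exact absurd (hca.symm.trans ((List.cons.inj hw).1.trans hdb)) hab

end LCS

def blowup (g : ℕ) (u : List α) : List α := u.flatMap (List.replicate g)

theorem blowup_cons (g : ℕ) (a : α) (u : List α) :
    blowup g (a :: u) = List.replicate g a ++ blowup g u :=
  List.flatMap_cons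

theorem LCSlen_blowup_le [DecidableEq α] (g : ℕ) :
    ∀ u v : List α, LCSlen (blowup g u) (blowup g v) ≤ g * LCSlen u v
  | [], _ => by simp [blowup, LCSlen]
  | _, [] => (LCSlen_le_length_right _ []).trans (Nat.zero_le _)
  | a :: u, b :: v => by
    rw [blowup_cons, blowup_cons, LCSlen]
    split_ifs with hab
    · subst hab
      rw [LCSlen_append_append_self, List.length_replicate, mul_add, mul_one]
      exact Nat.add_le_add_left (LCSlen_blowup_le g u v) g
    · calc _ ≤ max (LCSlen (blowup g (a :: u)) (blowup g v))
              (LCSlen (blowup g u) (blowup g (b :: v))) := by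
            simpa only [blowup_cons] using LCSlen_replicate_append_le hab g g _ _
        _ ≤ max (g * LCSlen (a :: u) v) (g * LCSlen u (b :: v)) :=
            max_le_max (LCSlen_blowup_le g _ _) (LCSlen_blowup_le g _ _)
        _ = _ := Nat.mul_max_mul_left _ _ _
termination_by u v => u.length + v.length

theorem length_sub (f : ℕ → α) (a b : ℕ) : (sub f a b).length = b - a := by
  simp [sub]

theorem sub_eq_map_range (f : ℕ → α) (a b : ℕ) :
    sub f a b = (List.range (b - a)).map fun t => f (a + t) := by
  rw [sub, List.range'_eq_map_range, List.map_map]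
  rfl

theorem sub_append_sub (f : ℕ → α) {a b c : ℕ} (hab : a ≤ b) (hbc : b ≤ c) :
    sub f a b ++ sub f b c = sub f a c := by
  rw [sub, sub, sub, ← List.map_append, show c - a = b - a + (c - b) by omega,
    ← List.range'_append, one_mul, Nat.add_sub_cancel' hab]

theorem sub_sublist_sub (f : ℕ → α) {a a' b b' : ℕ} (ha : a' ≤ a) (hb : b ≤ b') :
    (sub f a b).Sublist (sub f a' b') := by
  rcases le_total b a with hba | hab
  · simp [sub, Nat.sub_eq_zero_of_le hba]
  rw [← sub_append_sub f ha (hab.trans hb), ← sub_append_sub f hab hb, ← List.append_assoc]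
  exact (List.infix_append _ _ _).sublist

theorem sub_comp {β : Type*} (h : α → β) (f : ℕ → α) (a b : ℕ) :
    sub (h ∘ f) a b = (sub f a b).map h :=
  List.map_map.symm

theorem LCSlen_sub_le_LCSlen_sub_comp {β : Type*} [DecidableEq α] [DecidableEq β] (h : α → β)
    (f : ℕ → α) (a b c d : ℕ) :
    LCSlen (sub f a b) (sub f c d) ≤ LCSlen (sub (h ∘ f) a b) (sub (h ∘ f) c d) := by
  rw [sub_comp, sub_comp]
  exact LCSlen_le_LCSlen_map h _ _

theorem sub_eq_sub_of_shift {f f' : ℕ → α} {a b a' : ℕ}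
    (h : ∀ t < b - a, f (a + t) = f' (a' + t)) : sub f a b = sub f' a' (a' + (b - a)) := by
  rw [sub_eq_map_range, sub_eq_map_range, Nat.add_sub_cancel_left]
  exact List.map_congr_left fun t ht => h t (List.mem_range.mp ht)

theorem sub_div_mul_mul (S : ℕ → α) {g a b : ℕ} (hg : 0 < g) (hab : a ≤ b) :
    sub (fun t => S (t / g)) (g * a) (g * b) = blowup g (sub S a b) := by
  obtain ⟨d, rfl⟩ := Nat.exists_eq_add_of_le hab
  clear hab
  induction d generalizing a with
  | zero => simp [sub, blowup]
  | succ d ih =>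
    have hblock : sub (fun t => S (t / g)) (g * a) (g * (a + 1)) = List.replicate g (S a) := by
      rw [sub_eq_map_range, mul_add, mul_one, Nat.add_sub_cancel_left]
      trans (List.range g).map fun _ => S a
      · refine List.map_congr_left fun t ht => ?_
        rw [Nat.mul_add_div hg, Nat.div_eq_of_lt (List.mem_range.mp ht), add_zero]
      · rw [List.map_const', List.length_range]
    rw [← sub_append_sub _ (Nat.mul_le_mul_left g (Nat.le_add_right a 1))
        (Nat.mul_le_mul_left g (by omega)), hblock, show a + (d + 1) = a + 1 + d by omega, ih,
      ← sub_append_sub S (Nat.le_add_right a 1) (by omega)]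
    simp [sub, blowup]

section BlockBoundary

variable [DecidableEq α] (S : ℕ → α) {g i j k c : ℕ}

theorem LCSlen_sub_div_le_of_cut_left (hg : 0 < g) (hij : i ≤ j) (hjk : j ≤ k)
    (hkc : k ≤ g * c) :
    LCSlen (sub (fun t => S (t / g)) i j) (sub (fun t => S (t / g)) j k) ≤
      g * LCSlen (sub S (i / g) (j / g)) (sub S (j / g) c) + j % g := by
  set T : ℕ → α := fun t => S (t / g)
  have hi : g * (i / g) ≤ i := Nat.mul_div_le i g
  have hj : g * (j / g) ≤ j := Nat.mul_div_le j g
  have hij' : i / g ≤ j / g := Nat.div_le_div_right hij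
  have hjc : j / g ≤ c := Nat.div_le_of_le_mul (hjk.trans hkc)
  calc _ ≤ LCSlen (sub T (g * (i / g)) (g * (j / g)) ++ sub T (g * (j / g)) j)
            (sub T (g * (j / g)) (g * c)) := by
        rw [sub_append_sub T (Nat.mul_le_mul_left g hij') hj]
        exact LCSlen_mono (sub_sublist_sub T hi le_rfl) (sub_sublist_sub T hj hkc)
    _ ≤ LCSlen (sub T (g * (i / g)) (g * (j / g))) (sub T (g * (j / g)) (g * c)) +
          (sub T (g * (j / g)) j).length :=
        (LCSlen_append_left_le _ _ _).trans (Nat.add_le_add_left (LCSlen_le_length_left _ _) _)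
    _ ≤ _ := by
        rw [sub_div_mul_mul S hg hij', sub_div_mul_mul S hg hjc, length_sub, ← Nat.mod_def]
        exact Nat.add_le_add_right (LCSlen_blowup_le g _ _) _

theorem LCSlen_sub_div_le_of_cut_right (hg : 0 < g) (hij : i ≤ j) (hjk : j < k)
    (hkc : k ≤ g * c) :
    LCSlen (sub (fun t => S (t / g)) i j) (sub (fun t => S (t / g)) j k) ≤
      (g - j % g) + g * LCSlen (sub S (i / g) (j / g + 1)) (sub S (j / g + 1) c) := by
  set T : ℕ → α := fun t => S (t / g)
  have hi : g * (i / g) ≤ i := Nat.mul_div_le i g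
  have hj : j < g * (j / g + 1) := Nat.lt_mul_div_succ j hg
  have hij' : i / g ≤ j / g + 1 := (Nat.div_le_div_right hij).trans (Nat.le_succ _)
  have hjc : j / g < c := (Nat.div_lt_iff_lt_mul hg).mpr (by rw [mul_comm]; omega)
  calc _ ≤ LCSlen (sub T (g * (i / g)) (g * (j / g + 1)))
            (sub T j (g * (j / g + 1)) ++ sub T (g * (j / g + 1)) (g * c)) := by
        rw [sub_append_sub T hj.le (Nat.mul_le_mul_left g hjc)]
        exact LCSlen_mono (sub_sublist_sub T hi hj.le) (sub_sublist_sub T le_rfl hkc)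
    _ ≤ (sub T j (g * (j / g + 1))).length +
          LCSlen (sub T (g * (i / g)) (g * (j / g + 1))) (sub T (g * (j / g + 1)) (g * c)) :=
        (LCSlen_append_right_le _ _ _).trans (Nat.add_le_add_right (LCSlen_le_length_right _ _) _)
    _ ≤ _ := by
        rw [sub_div_mul_mul S hg hij', sub_div_mul_mul S hg hjc, length_sub]
        have := Nat.div_add_mod j g
        refine Nat.add_le_add ?_ (LCSlen_blowup_le g _ _)
        rw [mul_add]
        omega

theorem exists_two_mul_LCSlen_sub_div_le (hg : 0 < g) (hij : i ≤ j) (hjk : j < k)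
    (hkc : k ≤ g * c) :
    ∃ m, i / g ≤ m ∧ m ≤ c ∧
      2 * LCSlen (sub (fun t => S (t / g)) i j) (sub (fun t => S (t / g)) j k) ≤
        2 * g * LCSlen (sub S (i / g) m) (sub S m c) + g := by
  have hjc : j / g < c := (Nat.div_lt_iff_lt_mul hg).mpr (by rw [mul_comm]; omega)
  by_cases hr : 2 * (j % g) ≤ g
  · refine ⟨j / g, Nat.div_le_div_right hij, hjc.le, ?_⟩
    have := LCSlen_sub_div_le_of_cut_left S hg hij hjk.le hkc
    rw [mul_assoc]
    omega
  · refine ⟨j / g + 1, (Nat.div_le_div_right hij).trans (Nat.le_succ _), hjc, ?_⟩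
    have := LCSlen_sub_div_le_of_cut_right S hg hij hjk hkc
    rw [mul_assoc]
    omega

end BlockBoundary

theorem Nat.add_mod_eq_mod_add {a t n : ℕ} (h : a % n + t < n) : (a + t) % n = a % n + t := by
  rw [← Nat.mod_add_mod, Nat.mod_eq_of_lt h]

theorem exists_window_of_le_half {n l : ℕ} (i : ℕ) (hn : 0 < n) (hl : l ≤ n / 2) :
    ∃ c, c + l ≤ n ∧
      ((∀ t < l, (i + t) % n = c + t) ∨ ∀ t < l, (i + t + n / 2) % n = c + t) := by
  have hi := Nat.mod_lt i hn
  by_cases h : i % n + l ≤ n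
  · exact ⟨i % n, h, Or.inl fun t ht => Nat.add_mod_eq_mod_add (by omega)⟩
  · have hshift : (i + n / 2) % n = i % n + n / 2 - n := by
      rw [← Nat.mod_add_mod, Nat.mod_eq_sub_mod (by omega), Nat.mod_eq_of_lt (by omega)]
    refine ⟨i % n + n / 2 - n, by omega, Or.inr fun t ht => ?_⟩
    rw [add_right_comm, Nat.add_mod_eq_mod_add (by omega), hshift]

section SyncString

variable [DecidableEq α] {ε : ℝ} {n : ℕ} {S : ℕ → α}

theorem ED_sub_sub_eq (f : ℕ → α) {i j k : ℕ} (hij : i ≤ j) (hjk : j ≤ k) :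
    (ED (sub f i j) (sub f j k) : ℝ) = (k - i) - 2 * LCSlen (sub f i j) (sub f j k) := by
  have h := ED_add_two_mul_LCSlen (sub f i j) (sub f j k)
  rw [length_sub, length_sub] at h
  have h' : (ED (sub f i j) (sub f j k) : ℝ) + 2 * LCSlen (sub f i j) (sub f j k) =
      ((j - i : ℕ) : ℝ) + ((k - j : ℕ) : ℝ) := by exact_mod_cast h
  rw [Nat.cast_sub hij, Nat.cast_sub hjk] at h'
  linarith

theorem isSyncString_iff_two_mul_LCSlen :
    IsSyncString ε n S ↔ ∀ i j k : ℕ, i < j → j < k → k ≤ n →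
      (2 * LCSlen (sub S i j) (sub S j k) : ℝ) < ε * (k - i) := by
  refine forall_congr' fun i => forall_congr' fun j => forall_congr' fun k =>
    imp_congr_right fun hij => imp_congr_right fun hjk => imp_congr_right fun _ => ?_
  rw [ED_sub_sub_eq S hij.le hjk.le]
  constructor <;> intro h <;> linarith

theorem IsSyncString.pos (hS : IsSyncString ε n S) (hn : 2 ≤ n) : 0 < ε := by
  have h := isSyncString_iff_two_mul_LCSlen.mp hS 0 1 2 one_pos one_lt_two hn
  norm_num at h
  linarith [(Nat.cast_nonneg _ : (0 : ℝ) ≤ LCSlen (sub S 0 1) (sub S 1 2))]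

theorem IsSyncString.two_mul_LCSlen_le (hS : IsSyncString ε n S) (hε : 0 ≤ ε) {a m c : ℕ}
    (ham : a ≤ m) (hmc : m ≤ c) (hcn : c ≤ n) :
    (2 * LCSlen (sub S a m) (sub S m c) : ℝ) ≤ ε * (c - a) := by
  by_cases h : a < m ∧ m < c
  · exact (isSyncString_iff_two_mul_LCSlen.mp hS a m c h.1 h.2 hcn).le
  have h₁ := LCSlen_le_length_left (sub S a m) (sub S m c)
  have h₂ := LCSlen_le_length_right (sub S a m) (sub S m c)
  rw [length_sub] at h₁ h₂
  rw [show LCSlen (sub S a m) (sub S m c) = 0 by omega, Nat.cast_zero, mul_zero]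
  exact mul_nonneg hε (sub_nonneg.mpr (by exact_mod_cast ham.trans hmc))

theorem IsSyncString.two_mul_LCSlen_lt_of_window (hS : IsSyncString ε n S) {f : ℕ → α}
    {i j k c : ℕ} (hij : i < j) (hjk : j < k) (hc : c + (k - i) ≤ n)
    (hf : ∀ t < k - i, f (i + t) = S (c + t)) :
    (2 * LCSlen (sub f i j) (sub f j k) : ℝ) < ε * (k - i) := by
  rw [sub_eq_sub_of_shift (f := f) (a := i) (b := j) (a' := c) fun t ht => hf t (by omega),
    sub_eq_sub_of_shift (f := f) (a := j) (b := k) (a' := c + (j - i)) fun t ht => by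
      rw [show j + t = i + (j - i + t) by omega, hf _ (by omega), add_assoc]]
  rw [show c + (j - i) + (k - j) = c + (k - i) by omega]
  have h := isSyncString_iff_two_mul_LCSlen.mp hS c (c + (j - i)) (c + (k - i))
    (by omega) (by omega) hc
  rwa [Nat.cast_add, Nat.cast_sub (hij.trans hjk).le, add_sub_cancel_left] at h

theorem IsSyncString.two_mul_LCSlen_sub_div_le (hS : IsSyncString ε n S) (hε : 0 ≤ ε)
    {g i j k : ℕ} (hg : 0 < g) (hij : i ≤ j) (hjk : j < k) (hkn : k ≤ g * n) :
    (2 * LCSlen (sub (fun t => S (t / g)) i j) (sub (fun t => S (t / g)) j k) : ℝ) ≤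
      ε * (k - i) + (2 * ε + 1) * g := by
  have hkc : k ≤ g * ((k - 1) / g + 1) := by have := Nat.lt_mul_div_succ (k - 1) hg; omega
  have hck : g * ((k - 1) / g + 1) ≤ k - 1 + g := by
    have := Nat.mul_div_le (k - 1) g
    rw [mul_add, mul_one]
    omega
  have hcn : (k - 1) / g + 1 ≤ n :=
    Nat.succ_le_of_lt ((Nat.div_lt_iff_lt_mul hg).mpr (by rw [mul_comm]; omega))
  generalize (k - 1) / g + 1 = c at hkc hck hcn
  obtain ⟨m, ham, hmc, hL⟩ := exists_two_mul_LCSlen_sub_div_le S hg hij hjk hkc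
  have hLS := hS.two_mul_LCSlen_le hε ham hmc hcn
  have hspan : (g : ℝ) * (c - (i / g : ℕ)) ≤ k - i + 2 * g := by
    have hi := Nat.lt_mul_div_succ i hg
    have h : g * c + i ≤ k + g * (i / g) + 2 * g := by rw [mul_add] at hi; omega
    have h' : (g * c + i : ℝ) ≤ k + g * (i / g : ℕ) + 2 * g := by exact_mod_cast h
    linarith
  have hL' : (2 * LCSlen (sub (fun t => S (t / g)) i j) (sub (fun t => S (t / g)) j k) : ℝ) ≤
      g * (2 * LCSlen (sub S (i / g) m) (sub S m c)) + g := by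
    rw [← mul_assoc, mul_comm (g : ℝ) 2]
    exact_mod_cast hL
  calc _ ≤ g * (ε * (c - (i / g : ℕ))) + g := hL'.trans (by gcongr)
    _ = ε * (g * (c - (i / g : ℕ))) + g := by ring
    _ ≤ ε * (k - i + 2 * g) + g := by gcongr
    _ = _ := by ring

end SyncString

theorem stmt8_general {σ : Type*} [DecidableEq σ] (n g : ℕ) (γ ε : ℝ)
    (hn : Even n) (hg : (g : ℝ) = γ * n)
    (S : ℕ → σ) (hS : IsSyncString ε n S) :
    IsSyncString (ε + 6 * γ) (g * n)
      (fun i => (S (i % n), S ((i + n / 2) % n), S (i / g))) := by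
  set S' : ℕ → σ × σ × σ := fun i => (S (i % n), S ((i + n / 2) % n), S (i / g))
  rw [isSyncString_iff_two_mul_LCSlen]
  intro i j k hij hjk hkn
  obtain ⟨hg0, hn0⟩ : 0 < g ∧ 0 < n := CanonicallyOrderedAdd.mul_pos.mp (by omega)
  have hγ : 0 < γ := pos_of_mul_pos_left (hg ▸ Nat.cast_pos.mpr hg0) n.cast_nonneg
  have hik : (i : ℝ) < k := by exact_mod_cast hij.trans hjk
  have hproj (f : σ × σ × σ → σ) : (2 * LCSlen (sub S' i j) (sub S' j k) : ℝ) ≤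
      2 * LCSlen (sub (f ∘ S') i j) (sub (f ∘ S') j k) := by
    exact_mod_cast Nat.mul_le_mul_left 2 (LCSlen_sub_le_LCSlen_sub_comp f S' i j j k)
  -- `2 * LCSlen ≤ k - i` settles this case; the long case below needs `ε ≤ 1`.
  by_cases hε : 1 < ε + 6 * γ
  · have h := ED_sub_sub_eq S' hij.le hjk.le
    nlinarith [(ED (sub S' i j) (sub S' j k)).cast_nonneg (α := ℝ)]
  rcases le_or_gt (k - i) (n / 2) with hshort | hlong
  · obtain ⟨c, hc, hwin⟩ := exists_window_of_le_half i hn0 hshort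
    obtain ⟨f, hf⟩ : ∃ f : σ × σ × σ → σ, ∀ t < k - i, (f ∘ S') (i + t) = S (c + t) :=
      hwin.elim (fun h => ⟨Prod.fst, fun t ht => congrArg S (h t ht)⟩)
        fun h => ⟨fun x => x.2.1, fun t ht => congrArg S (h t ht)⟩
    calc _ ≤ _ := hproj f
      _ < ε * (k - i) := hS.two_mul_LCSlen_lt_of_window hij hjk hc hf
      _ ≤ _ := by nlinarith
  · have hn2 : (n : ℝ) + 1 ≤ 2 * (k - i) := by
      have : n + 1 + 2 * i ≤ 2 * k := by omega
      have : (n + 1 + 2 * i : ℝ) ≤ 2 * k := by exact_mod_cast this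
      linarith
    calc _ ≤ _ := hproj fun x => x.2.2
      _ ≤ ε * (k - i) + (2 * ε + 1) * g :=
        hS.two_mul_LCSlen_sub_div_le (hS.pos (by obtain ⟨m, rfl⟩ := hn; omega)).le hg0
          hij.le hjk hkn
      _ < _ := by nlinarith

/-- Boosting step I: from an ε-synchronization string of even length `n`, the displayed
interleaved string of length `γn² = g·n` is an `(ε + 6γ)`-synchronization string. -/
theorem stmt8 {σ : Type*} [DecidableEq σ] (n g : ℕ) (γ ε : ℝ)
    (hn : Even n) (hn0 : 0 < n) (hγ : 0 < γ) (hg : (g : ℝ) = γ * n)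
    (S : ℕ → σ) (hS : IsSyncString ε n S) :
    IsSyncString (ε + 6 * γ) (g * n)
      (fun i => (S (i % n), S ((i + n / 2) % n), S (i / g))) :=
  stmt8_general n g γ ε hn hg S hS
end

section
/- Infinite ε-synchronization strings exist: for every ε ∈ (0,1), if for every n ∈ ℕ there exists an ε-synchronization string of length n over a fixed finite alphabet Σ, then there exists an infinite string S over Σ such that every pair of adjacent finite intervals [i,j), [j,k) satisfies ED(S[i,j), S[j,k)) > (1-ε)(k-i). -/
variable {α : Type*}

/-
Give the alphabet the discrete topology, so that the space of infinite strings
`ℕ → σ` is compact. Being an ε-synchronization string of length `n` only depends on the first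
`n` symbols, so these sets are closed; they are nonempty and decrease in `n`, hence have a
common point, which is the required infinite string.
-/

theorem isClosed_of_determined_by_prefix {X : Type*} [TopologicalSpace X] [DiscreteTopology X]
    {s : Set (ℕ → X)} (n : ℕ) (hs : ∀ S S', (∀ m < n, S m = S' m) → S ∈ s → S' ∈ s) :
    IsClosed s := by
  let init : (ℕ → X) → Fin n → X := fun S m => S m
  have hs_eq : s = init ⁻¹' (init '' s) := by
    refine (Set.subset_preimage_image _ _).antisymm ?_
    rintro S' ⟨S, hS, hpre⟩
    exact hs S S' (fun m hm => congrFun hpre ⟨m, hm⟩) hS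
  rw [hs_eq]
  exact (isClosed_discrete _).preimage (continuous_pi fun m => continuous_apply _)

theorem sub_congr {S S' : ℕ → α} {i j : ℕ} (h : ∀ m < j, S m = S' m) :
    sub S i j = sub S' i j :=
  List.map_congr_left fun m hm => h m (by have := List.mem_range'.1 hm; omega)

namespace IsSyncString

variable [DecidableEq α] {ε : ℝ} {S : ℕ → α}

theorem congr {S' : ℕ → α} {n : ℕ} (h : ∀ m < n, S m = S' m) (hS : IsSyncString ε n S) :
    IsSyncString ε n S' := by
  intro i j k hij hjk hkn
  have hk : ∀ m < k, S m = S' m := fun m hm => h m (by omega)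
  rw [← sub_congr fun m hm => hk m (by omega), ← sub_congr hk]
  exact hS i j k hij hjk hkn

theorem mono {m n : ℕ} (hmn : m ≤ n) (hS : IsSyncString ε n S) : IsSyncString ε m S :=
  fun i j k hij hjk hkm => hS i j k hij hjk (hkm.trans hmn)

theorem isClosed_setOf [TopologicalSpace α] [DiscreteTopology α] (ε : ℝ) (n : ℕ) :
    IsClosed {S : ℕ → α | IsSyncString ε n S} :=
  isClosed_of_determined_by_prefix n fun _ _ h hS => hS.congr h

end IsSyncString

theorem stmt14_general {σ : Type*} [DecidableEq σ] [Fintype σ] (ε : ℝ)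
    (h : ∀ n : ℕ, ∃ S : ℕ → σ, IsSyncString ε n S) :
    ∃ S : ℕ → σ, ∀ i j k : ℕ, i < j → j < k →
      (1 - ε) * ((k : ℝ) - i) < ED (sub S i j) (sub S j k) := by
  let : TopologicalSpace σ := ⊥
  have : DiscreteTopology σ := ⟨rfl⟩
  obtain ⟨S, hS⟩ := IsCompact.nonempty_iInter_of_sequence_nonempty_isCompact_isClosed
    (fun n => {S : ℕ → σ | IsSyncString ε n S}) (fun n _ hS => hS.mono n.le_succ) h
    (IsSyncString.isClosed_setOf ε 0).isCompact (IsSyncString.isClosed_setOf ε)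
  exact ⟨S, fun i j k hij hjk => Set.mem_iInter.1 hS k i j k hij hjk le_rfl⟩

/-- Existence of infinite ε-synchronization strings over a finite alphabet, given
ε-synchronization strings of every finite length. -/
theorem stmt14 {σ : Type*} [DecidableEq σ] [Fintype σ] (ε : ℝ)
    (hε0 : 0 < ε) (hε1 : ε < 1)
    (h : ∀ n : ℕ, ∃ S : ℕ → σ, IsSyncString ε n S) :
    ∃ S : ℕ → σ, ∀ i j k : ℕ, i < j → j < k →
      (1 - ε) * ((k : ℝ) - i) < ED (sub S i j) (sub S j k) :=
  stmt14_general ε h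
end
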